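/- Let n ≥ 1, let b : 𝔹ⁿ → 𝔹ⁿ be a holomorphic map of the open unit ball into itself, let α ≥ 1 be a real number, and suppose the kernel K^{b,α}(z,w) = ((1 − ⟨b(z), b(w)⟩)/(1 − ⟨z,w⟩))^α (principal branch) is positive semidefinite on 𝔹ⁿ. Then for every c ∈ ℂⁿ, the kernel (z,w) ↦ (|c|² − ⟨b(z), c⟩ · conj(⟨b(w), c⟩)) · (1 − ⟨z,w⟩)^{−α} is positive semidefinite on 𝔹ⁿ, where |c|² = ∑_{i=1}^n |c_i|². (This expresses the operator bound ‖∑_{i=1}^n conj(c_i) M_{b_i}‖ ≤ |c| on H²_{n,α}.) -/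

import Mathlib

open Complex Metric ComplexConjugate
open scoped ComplexOrder

noncomputable section

/-- A kernel `K : X → X → ℂ` is positive semidefinite on a set `S`: for all finite
families of points of `S` and scalars, the associated quadratic form is a
nonnegative real number (using the partial order on `ℂ`). -/
def IsPSDKernelOn {X : Type*} (K : X → X → ℂ) (S : Set X) : Prop :=
  ∀ (n : ℕ) (x : Fin n → X), (∀ i, x i ∈ S) → ∀ c : Fin n → ℂ,
    0 ≤ ∑ i, ∑ j, c i * conj (c j) * K (x i) (x j)

/-!
Positive semidefinite kernels are closed under sums, Schur products, nonnegative scalings and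
pointwise limits, hence under `exp`. Expanding `-log (1 - t) = ∑ tᵏ / k` shows that
`(1 - ⟨z, w⟩)^(-β) = exp (β · (-log (1 - ⟨z, w⟩)))` is positive semidefinite on the ball for
`β ≥ 0`. For `α ≥ 1` the kernel
`G(z, w) = (‖c‖² - ⟨z, c⟩ conj ⟨w, c⟩) (1 - ⟨z, w⟩)^(-α)` splits as
`‖c‖² (1 - ⟨z, w⟩)^(-(α - 1)) + (‖c‖² ⟨z, w⟩ - ⟨z, c⟩ conj ⟨w, c⟩) (1 - ⟨z, w⟩)^(-α)`,
whose middle factor is positive semidefinite by Cauchy–Schwarz. The target kernel is the Schur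
product `G(b z, b w) · K^{b,α}(z, w)`, because principal powers satisfy
`A^(-α) (A / B)^α = B^(-α)` for `A`, `B` in the right half-plane.
-/

open scoped InnerProductSpace
open Matrix Nat

theorem Matrix.posSemidef_of_forall_star_dotProduct_mulVec_nonneg {ι : Type*} [Fintype ι]
    [DecidableEq ι] {M : Matrix ι ι ℂ} (hM : ∀ v, 0 ≤ star v ⬝ᵥ (M *ᵥ v)) : M.PosSemidef := by
  rw [← Matrix.isPositive_toEuclideanLin_iff, LinearMap.isPositive_iff_complex]
  intro v
  have hv : ⟪M.toEuclideanLin v, v⟫_ℂ = conj (star v.ofLp ⬝ᵥ (M *ᵥ v.ofLp)) := by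
    rw [EuclideanSpace.inner_eq_star_dotProduct, dotProduct_star, dotProduct_comm]
    simp
  obtain ⟨hre, him⟩ := Complex.nonneg_iff.mp (hM v.ofLp)
  rw [hv]
  refine ⟨?_, by simpa using hre⟩
  apply Complex.ext <;> simp [← him]

section Kernels

variable {X : Type*} {S : Set X}

/-- With `K (x j) (x i)` in entry `(i, j)`, the defining form is `star c ⬝ᵥ M *ᵥ c` and the kernel
`⟪f w, f z⟫` becomes the Gram matrix of `f ∘ x`. -/
theorem isPSDKernelOn_iff_posSemidef {K : X → X → ℂ} :
    IsPSDKernelOn K S ↔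
      ∀ m (x : Fin m → X), (∀ i, x i ∈ S) → (Matrix.of fun i j => K (x j) (x i)).PosSemidef := by
  have hform : ∀ m (x : Fin m → X) (c : Fin m → ℂ),
      star c ⬝ᵥ ((Matrix.of fun i j => K (x j) (x i)) *ᵥ c)
        = ∑ i, ∑ j, c i * conj (c j) * K (x i) (x j) := by
    intro m x c
    simp only [dotProduct, mulVec, Matrix.of_apply, Finset.mul_sum, Pi.star_apply, RCLike.star_def]
    rw [Finset.sum_comm]
    exact Finset.sum_congr rfl fun i _ => Finset.sum_congr rfl fun j _ => by ring
  refine ⟨fun h m x hx => ?_, fun h m x hx c => ?_⟩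
  · exact posSemidef_of_forall_star_dotProduct_mulVec_nonneg fun c => hform m x c ▸ h m x hx c
  · exact hform m x c ▸ (h m x hx).dotProduct_mulVec_nonneg c

namespace IsPSDKernelOn

variable {K L : X → X → ℂ}

theorem congr (h : IsPSDKernelOn K S) (he : ∀ z ∈ S, ∀ w ∈ S, K z w = L z w) :
    IsPSDKernelOn L S := by
  intro m x hx c
  convert h m x hx c using 4 with i _ j _
  rw [he _ (hx i) _ (hx j)]

theorem comp {Y : Type*} {T : Set Y} (h : IsPSDKernelOn K S) (f : Y → X)
    (hf : ∀ y ∈ T, f y ∈ S) : IsPSDKernelOn (fun y y' => K (f y) (f y')) T :=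
  fun m x hx => h m (f ∘ x) fun i => hf _ (hx i)

theorem add (hK : IsPSDKernelOn K S) (hL : IsPSDKernelOn L S) :
    IsPSDKernelOn (fun z w => K z w + L z w) S := by
  rw [isPSDKernelOn_iff_posSemidef] at *
  exact fun m x hx => (hK m x hx).add (hL m x hx)

theorem mul (hK : IsPSDKernelOn K S) (hL : IsPSDKernelOn L S) :
    IsPSDKernelOn (fun z w => K z w * L z w) S := by
  rw [isPSDKernelOn_iff_posSemidef] at *
  exact fun m x hx => (hK m x hx).hadamard (hL m x hx)

theorem of_hasSum {K : ℕ → X → X → ℂ} (hK : ∀ k, IsPSDKernelOn (K k) S)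
    (hL : ∀ z ∈ S, ∀ w ∈ S, HasSum (fun k => K k z w) (L z w)) : IsPSDKernelOn L S := by
  intro m x hx c
  have hform : HasSum (fun k => ∑ i, ∑ j, c i * conj (c j) * K k (x i) (x j))
      (∑ i, ∑ j, c i * conj (c j) * L (x i) (x j)) :=
    hasSum_sum fun i _ => hasSum_sum fun j _ => (hL _ (hx i) _ (hx j)).mul_left _
  exact hform.nonneg fun k => hK k m x hx c

end IsPSDKernelOn

theorem isPSDKernelOn_inner {H : Type*} [NormedAddCommGroup H] [InnerProductSpace ℂ H]
    (f : X → H) : IsPSDKernelOn (fun z w => ⟪f w, f z⟫_ℂ) S :=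
  isPSDKernelOn_iff_posSemidef.mpr fun _ x _ => posSemidef_gram ℂ (f ∘ x)

theorem isPSDKernelOn_opNorm_sq_mul_inner_sub_inner {E F : Type*} [NormedAddCommGroup E]
    [InnerProductSpace ℂ E] [NormedAddCommGroup F] [InnerProductSpace ℂ F] {S : Set E}
    (f : E →L[ℂ] F) : IsPSDKernelOn (fun z w => (‖f‖ ^ 2 : ℂ) * ⟪w, z⟫_ℂ - ⟪f w, f z⟫_ℂ) S :=
  isPSDKernelOn_iff_posSemidef.mpr fun _ x _ => by
    have e : (Matrix.of fun i j => (‖f‖ ^ 2 : ℂ) * ⟪x i, x j⟫_ℂ - ⟪f (x i), f (x j)⟫_ℂ) =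
        ‖f‖ ^ 2 • gram ℂ x - gram ℂ (f ∘ x) := by
      ext i j
      simp
    exact e ▸ posSemidef_opNorm_smul_gram_sub_gram x f

theorem isPSDKernelOn_const {r : ℝ} (hr : 0 ≤ r) : IsPSDKernelOn (fun _ _ => (r : ℂ)) S :=
  (isPSDKernelOn_inner fun _ => (Real.sqrt r : ℂ)).congr fun _ _ _ _ => by
    rw [inner_self_eq_norm_sq_to_K]
    simp [abs_of_nonneg (Real.sqrt_nonneg r), ← Complex.ofReal_pow, Real.sq_sqrt hr]

namespace IsPSDKernelOn

variable {K : X → X → ℂ}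

theorem const_mul (h : IsPSDKernelOn K S) {r : ℝ} (hr : 0 ≤ r) :
    IsPSDKernelOn (fun z w => r * K z w) S :=
  (isPSDKernelOn_const hr).mul h

theorem pow (h : IsPSDKernelOn K S) (k : ℕ) : IsPSDKernelOn (fun z w => K z w ^ k) S := by
  induction k with
  | zero => simpa using isPSDKernelOn_const (S := S) zero_le_one
  | succ k ih => simpa only [pow_succ] using ih.mul h

theorem exp (h : IsPSDKernelOn K S) : IsPSDKernelOn (fun z w => Complex.exp (K z w)) S := by
  refine of_hasSum (fun k => (h.pow k).const_mul (r := (k ! : ℝ)⁻¹) (by positivity))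
    fun z _ w _ => ?_
  simpa [div_eq_inv_mul, ← Complex.exp_eq_exp_ℂ] using
    NormedSpace.expSeries_div_hasSum_exp (K z w)

end IsPSDKernelOn

end Kernels

theorem Complex.log_div_of_re_pos {x y : ℂ} (hx : 0 < x.re) (hy : 0 < y.re) :
    log (x / y) = log x - log y := by
  have hx0 : x ≠ 0 := fun h => by simp [h] at hx
  have hy0 : y ≠ 0 := fun h => by simp [h] at hy
  have hargx := abs_lt.mp (abs_arg_lt_pi_div_two_iff.mpr (Or.inl hx))
  have hargy := abs_lt.mp (abs_arg_lt_pi_div_two_iff.mpr (Or.inl hy))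
  have hy_pi : y.arg ≠ Real.pi := by linarith [Real.pi_pos]
  rw [div_eq_mul_inv, (log_mul_eq_add_log_iff hx0 (inv_ne_zero hy0)).mpr, log_inv y hy_pi,
    sub_eq_add_neg]
  rw [arg_inv, if_neg hy_pi]
  constructor <;> linarith [Real.pi_pos]

theorem Complex.cpow_neg_mul_div_cpow_of_re_pos {x y : ℂ} (hx : 0 < x.re) (hy : 0 < y.re)
    (s : ℂ) : x ^ (-s) * (x / y) ^ s = y ^ (-s) := by
  have hx0 : x ≠ 0 := fun h => by simp [h] at hx
  have hy0 : y ≠ 0 := fun h => by simp [h] at hy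
  rw [cpow_def_of_ne_zero hx0, cpow_def_of_ne_zero (div_ne_zero hx0 hy0),
    cpow_def_of_ne_zero hy0, ← Complex.exp_add, log_div_of_re_pos hx hy]
  ring_nf

section Ball

variable {E F : Type*} [NormedAddCommGroup E] [InnerProductSpace ℂ E]
  [NormedAddCommGroup F] [InnerProductSpace ℂ F]

theorem norm_inner_lt_one_of_mem_ball {z w : E} (hz : z ∈ ball (0 : E) 1)
    (hw : w ∈ ball (0 : E) 1) : ‖⟪w, z⟫_ℂ‖ < 1 := by
  rw [mem_ball_zero_iff] at hz hw
  calc ‖⟪w, z⟫_ℂ‖ ≤ ‖w‖ * ‖z‖ := norm_inner_le_norm w z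
    _ < 1 := by nlinarith [norm_nonneg w, norm_nonneg z]

theorem re_one_sub_inner_pos {z w : E} (hz : z ∈ ball (0 : E) 1) (hw : w ∈ ball (0 : E) 1) :
    0 < (1 - ⟪w, z⟫_ℂ).re := by
  have := (re_le_norm ⟪w, z⟫_ℂ).trans_lt (norm_inner_lt_one_of_mem_ball hz hw)
  simp only [sub_re, one_re]
  linarith

theorem one_sub_inner_ne_zero {z w : E} (hz : z ∈ ball (0 : E) 1) (hw : w ∈ ball (0 : E) 1) :
    1 - ⟪w, z⟫_ℂ ≠ 0 :=
  fun h => by simpa [h] using re_one_sub_inner_pos hz hw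

theorem isPSDKernelOn_neg_log_one_sub_inner :
    IsPSDKernelOn (fun z w : E => -log (1 - ⟪w, z⟫_ℂ)) (ball 0 1) := by
  refine IsPSDKernelOn.of_hasSum
    (fun k => ((isPSDKernelOn_inner id).pow k).const_mul (r := (k : ℝ)⁻¹) (by positivity))
    fun z hz w hw => ?_
  simpa [div_eq_inv_mul] using
    hasSum_taylorSeries_neg_log (norm_inner_lt_one_of_mem_ball hz hw)

theorem isPSDKernelOn_one_sub_inner_cpow_neg {β : ℝ} (hβ : 0 ≤ β) :
    IsPSDKernelOn (fun z w : E => (1 - ⟪w, z⟫_ℂ) ^ (-(β : ℂ))) (ball 0 1) := by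
  refine (isPSDKernelOn_neg_log_one_sub_inner.const_mul hβ).exp.congr fun z hz w hw => ?_
  rw [cpow_def_of_ne_zero (one_sub_inner_ne_zero hz hw)]
  ring_nf

theorem isPSDKernelOn_opNorm_sq_sub_inner_mul_cpow_neg (f : E →L[ℂ] F) {α : ℝ} (hα : 1 ≤ α) :
    IsPSDKernelOn
      (fun z w => ((‖f‖ ^ 2 : ℂ) - ⟪f w, f z⟫_ℂ) * (1 - ⟪w, z⟫_ℂ) ^ (-(α : ℂ))) (ball 0 1) := by
  have hlead := (isPSDKernelOn_one_sub_inner_cpow_neg (E := E) (sub_nonneg.mpr hα)).const_mul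
    (sq_nonneg ‖f‖)
  have htail := (isPSDKernelOn_opNorm_sq_mul_inner_sub_inner (S := ball 0 1) f).mul
    (isPSDKernelOn_one_sub_inner_cpow_neg (zero_le_one.trans hα))
  refine (hlead.add htail).congr fun z hz w hw => ?_
  have hpow : (1 - ⟪w, z⟫_ℂ) ^ (-((α - 1 : ℝ) : ℂ)) =
      (1 - ⟪w, z⟫_ℂ) * (1 - ⟪w, z⟫_ℂ) ^ (-(α : ℂ)) := by
    rw [show -((α - 1 : ℝ) : ℂ) = 1 + -(α : ℂ) by push_cast; ring,
      cpow_add _ _ (one_sub_inner_ne_zero hz hw), cpow_one]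
  rw [hpow]
  push_cast
  ring

end Ball

theorem EuclideanSpace.sum_mul_conj_eq_inner {ι : Type*} [Fintype ι] (u : EuclideanSpace ℂ ι)
    (c : ι → ℂ) : ∑ i, u i * conj (c i) = ⟪WithLp.toLp 2 c, u⟫_ℂ := by
  simp [PiLp.inner_apply]

theorem ball_row_contraction_scalar_combination_general
    (n : ℕ)
    (b : EuclideanSpace ℂ (Fin n) → EuclideanSpace ℂ (Fin n))
    (hb_maps : ∀ z ∈ ball (0 : EuclideanSpace ℂ (Fin n)) 1,
      b z ∈ ball (0 : EuclideanSpace ℂ (Fin n)) 1)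
    (α : ℝ) (hα : 1 ≤ α)
    (hpos : IsPSDKernelOn
      (fun z w => ((1 - ∑ i, b z i * conj (b w i)) / (1 - ∑ i, z i * conj (w i))) ^ (α : ℂ))
      (ball (0 : EuclideanSpace ℂ (Fin n)) 1))
    (c : Fin n → ℂ) :
    IsPSDKernelOn
      (fun z w => (((∑ i, ‖c i‖ ^ 2 : ℝ) : ℂ) -
          (∑ i, b z i * conj (c i)) * conj (∑ i, b w i * conj (c i))) *
        (1 - ∑ i, z i * conj (w i)) ^ (-(α : ℂ)))
      (ball (0 : EuclideanSpace ℂ (Fin n)) 1) := by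
  let f := innerSL ℂ (WithLp.toLp 2 c : EuclideanSpace ℂ (Fin n))
  have hG := (isPSDKernelOn_opNorm_sq_sub_inner_mul_cpow_neg f hα).comp b hb_maps
  refine (hG.mul hpos).congr fun z hz w hw => ?_
  have hnorm : ((∑ i, ‖c i‖ ^ 2 : ℝ) : ℂ) = (‖f‖ ^ 2 : ℂ) := by
    rw [innerSL_apply_norm, ← Complex.ofReal_pow, EuclideanSpace.norm_sq_eq]
  simp only [EuclideanSpace.sum_mul_conj_eq_inner, WithLp.toLp_ofLp, hnorm]
  rw [mul_assoc, Complex.cpow_neg_mul_div_cpow_of_re_pos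
    (re_one_sub_inner_pos (hb_maps z hz) (hb_maps w hw)) (re_one_sub_inner_pos hz hw)]
  simp only [f, innerSL_apply_apply, RCLike.inner_apply, inner_conj_symm]

/-- If `K^{b,α}` is positive semidefinite then for every `c ∈ ℂⁿ` the kernel
`(|c|² − ⟨b z, c⟩·conj(⟨b w, c⟩))·(1 − ⟨z,w⟩)^{−α}` is positive semidefinite
(the operator bound `‖∑ conj(cᵢ) M_{b_i}‖ ≤ |c|` on `H²_{n,α}`). -/
theorem ball_row_contraction_scalar_combination
    (n : ℕ) (hn : 1 ≤ n)
    (b : EuclideanSpace ℂ (Fin n) → EuclideanSpace ℂ (Fin n))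
    (hb_holo : DifferentiableOn ℂ b (ball (0 : EuclideanSpace ℂ (Fin n)) 1))
    (hb_maps : ∀ z ∈ ball (0 : EuclideanSpace ℂ (Fin n)) 1,
      b z ∈ ball (0 : EuclideanSpace ℂ (Fin n)) 1)
    (α : ℝ) (hα : 1 ≤ α)
    (hpos : IsPSDKernelOn
      (fun z w => ((1 - ∑ i, b z i * conj (b w i)) / (1 - ∑ i, z i * conj (w i))) ^ (α : ℂ))
      (ball (0 : EuclideanSpace ℂ (Fin n)) 1))
    (c : Fin n → ℂ) :
    IsPSDKernelOn
      (fun z w => (((∑ i, ‖c i‖ ^ 2 : ℝ) : ℂ) -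
          (∑ i, b z i * conj (c i)) * conj (∑ i, b w i * conj (c i))) *
        (1 - ∑ i, z i * conj (w i)) ^ (-(α : ℂ)))
      (ball (0 : EuclideanSpace ℂ (Fin n)) 1) :=
  ball_row_contraction_scalar_combination_general n b hb_maps α hα hpos c
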